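/- arXiv:1912.03290 — 3 statements merged into one kernel-verified Lean document; each statement's English description precedes it below -/
import Mathlib

section
/- ATT error decomposition under the autoregressive model: under the time-varying AR(L) model, with ρ̄ = (1/J)Σ_{j=1}^J ρ_{T_j} and ξ_{T_j} = ρ_{T_j} − ρ̄, for any weight matrix Γ with columns supported on donors, the following exact identity holds: ATT̂_0 − ATT_0 = Σ_{ℓ=1}^L ρ̄_ℓ·(1/J)Σ_{j=1}^J (Y_{j,T_j−ℓ} − Σ_i γ_{ij} Y_{i,T_j−ℓ}) + (1/J)Σ_{j=1}^J Σ_{ℓ=1}^L ξ_{T_j,ℓ}·(Y_{j,T_j−ℓ} − Σ_i γ_{ij} Y_{i,T_j−ℓ}) + (1/J)Σ_{j=1}^J (ε_{j,T_j} − Σ_i γ_{ij} ε_{i,T_j}). -/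
open Finset

/-- **ATT error decomposition under the time-varying autoregressive model.**
Writing `ρ̄ = (1/J)∑_j ρ_{T_j}` and `ξ_{T_j} = ρ_{T_j} − ρ̄`, the error of the estimated
ATT at event time 0 decomposes exactly into a pooled-imbalance term weighted by `ρ̄`, a
unit-level-imbalance term weighted by the deviations `ξ_{T_j}`, and a noise-average term. -/
theorem att_error_decomposition_ar
    (N J L : ℕ)
    (tr : Fin J → Fin N) (T : Fin J → ℕ)
    (Yobs Yinf ε : Fin N → ℕ → ℝ) (ρ : ℕ → ℕ → ℝ) (γ : Fin N → Fin J → ℝ)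
    (hAR : ∀ (i : Fin N) (j : Fin J),
      Yinf i (T j) = ∑ ℓ ∈ Icc 1 L, ρ (T j) ℓ * Yinf i (T j - ℓ) + ε i (T j))
    (htreated : ∀ (j : Fin J), ∀ ℓ ∈ Icc 1 L,
      Yobs (tr j) (T j - ℓ) = Yinf (tr j) (T j - ℓ))
    (hdonor : ∀ (i : Fin N) (j : Fin J), γ i j ≠ 0 →
      (∀ ℓ ∈ Icc 1 L, Yobs i (T j - ℓ) = Yinf i (T j - ℓ)) ∧ Yobs i (T j) = Yinf i (T j)) :
    ((J : ℝ)⁻¹ * ∑ j, (Yobs (tr j) (T j) - ∑ i, γ i j * Yobs i (T j))) -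
      ((J : ℝ)⁻¹ * ∑ j, (Yobs (tr j) (T j) - Yinf (tr j) (T j))) =
      (∑ ℓ ∈ Icc 1 L, ((J : ℝ)⁻¹ * ∑ j', ρ (T j') ℓ) *
          ((J : ℝ)⁻¹ * ∑ j, (Yobs (tr j) (T j - ℓ) - ∑ i, γ i j * Yobs i (T j - ℓ)))) +
      ((J : ℝ)⁻¹ * ∑ j, ∑ ℓ ∈ Icc 1 L,
          (ρ (T j) ℓ - (J : ℝ)⁻¹ * ∑ j', ρ (T j') ℓ) *
          (Yobs (tr j) (T j - ℓ) - ∑ i, γ i j * Yobs i (T j - ℓ))) +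
      ((J : ℝ)⁻¹ * ∑ j, (ε (tr j) (T j) - ∑ i, γ i j * ε i (T j))) := by
  set B : Fin J → ℕ → ℝ := fun j ℓ =>
    Yobs (tr j) (T j - ℓ) - ∑ i, γ i j * Yobs i (T j - ℓ) with hB
  set c : ℕ → ℝ := fun ℓ => (J : ℝ)⁻¹ * ∑ j', ρ (T j') ℓ with hc
  -- per-unit key identity
  have key : ∀ j : Fin J,
      Yinf (tr j) (T j) - ∑ i, γ i j * Yobs i (T j)
        = (∑ ℓ ∈ Icc 1 L, ρ (T j) ℓ * B j ℓ)
          + (ε (tr j) (T j) - ∑ i, γ i j * ε i (T j)) := by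
    intro j
    have htr : Yinf (tr j) (T j)
        = ∑ ℓ ∈ Icc 1 L, ρ (T j) ℓ * Yobs (tr j) (T j - ℓ) + ε (tr j) (T j) := by
      rw [hAR (tr j) j]
      congr 1
      exact Finset.sum_congr rfl fun ℓ hℓ => by rw [htreated j ℓ hℓ]
    have hdon : ∀ i : Fin N, γ i j * Yobs i (T j)
        = γ i j * (∑ ℓ ∈ Icc 1 L, ρ (T j) ℓ * Yobs i (T j - ℓ) + ε i (T j)) := by
      intro i
      by_cases h : γ i j = 0
      · simp [h]
      · obtain ⟨h1, h2⟩ := hdonor i j h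
        rw [h2, hAR i j]
        congr 2
        exact Finset.sum_congr rfl fun ℓ hℓ => by rw [h1 ℓ hℓ]
    rw [htr, Finset.sum_congr rfl fun i _ => hdon i]
    simp only [hB, mul_add, Finset.mul_sum, Finset.sum_add_distrib, mul_sub]
    rw [Finset.sum_comm (s := Finset.univ) (t := Icc 1 L)]
    rw [Finset.sum_sub_distrib]
    have hswap : ∑ ℓ ∈ Icc 1 L, ∑ i, ρ (T j) ℓ * (γ i j * Yobs i (T j - ℓ))
        = ∑ ℓ ∈ Icc 1 L, ∑ i, γ i j * (ρ (T j) ℓ * Yobs i (T j - ℓ)) := by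
      exact Finset.sum_congr rfl fun ℓ _ => Finset.sum_congr rfl fun i _ => by ring
    rw [hswap]
    ring
  -- LHS
  have hLHS : ((J : ℝ)⁻¹ * ∑ j, (Yobs (tr j) (T j) - ∑ i, γ i j * Yobs i (T j))) -
      ((J : ℝ)⁻¹ * ∑ j, (Yobs (tr j) (T j) - Yinf (tr j) (T j)))
      = (J : ℝ)⁻¹ * ∑ j, (Yinf (tr j) (T j) - ∑ i, γ i j * Yobs i (T j)) := by
    rw [← mul_sub, ← Finset.sum_sub_distrib]
    congr 1
    exact Finset.sum_congr rfl fun j _ => by ring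
  rw [hLHS]
  -- rewrite first RHS term
  have h1 : (J : ℝ)⁻¹ * ∑ j, ∑ ℓ ∈ Icc 1 L, c ℓ * B j ℓ
      = (∑ ℓ ∈ Icc 1 L, c ℓ * ((J : ℝ)⁻¹ * ∑ j, B j ℓ)) := by
    rw [Finset.sum_comm (s := Finset.univ) (t := Icc 1 L)]
    simp only [Finset.mul_sum]
    exact Finset.sum_congr rfl fun ℓ _ => Finset.sum_congr rfl fun j _ => by ring
  rw [← h1, ← mul_add, ← mul_add, ← Finset.sum_add_distrib, ← Finset.sum_add_distrib]
  congr 1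
  refine Finset.sum_congr rfl fun j _ => ?_
  rw [key j, ← Finset.sum_add_distrib]
  congr 1
  exact Finset.sum_congr rfl fun ℓ _ => by ring
end

section
/- ATT error expansion under the linear factor model: under the factor model with non-singular lag Gram matrices, for any weight matrix Γ with columns γ_j supported on donors, the following exact identity holds: ATT̂_k − ATT_k = (1/(J√L))Σ_{j=1}^J Σ_{ℓ=1}^L μ_{T_j+k}'P^{(j)}_ℓ·(Y_{j,T_j−ℓ} − Σ_i γ_{ij} Y_{i,T_j−ℓ}) − (1/(J√L))Σ_{j=1}^J Σ_{ℓ=1}^L μ_{T_j+k}'P^{(j)}_ℓ·(ε_{j,T_j−ℓ} − Σ_i γ_{ij} ε_{i,T_j−ℓ}) + (1/J)Σ_{j=1}^J (ε_{j,T_j+k} − Σ_i γ_{ij} ε_{i,T_j+k}). -/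
open Finset

/-- **ATT error expansion under the linear factor model.** Under the factor model with
non-singular lag Gram matrices `Ω_j'Ω_j` and `P^{(j)} = √L (Ω_j'Ω_j)⁻¹ Ω_j'`, for any
weight matrix supported on donor units the estimation error of the ATT at event time `k`
decomposes exactly into a projected pre-treatment imbalance term, a projected
pre-treatment noise term, and a post-treatment noise term. -/
theorem att_error_expansion_factor_model
    (N J F L k : ℕ) (hL : 0 < L)
    (tr : Fin J → Fin N) (T : Fin J → ℕ) (hLT : ∀ j, L < T j)
    (φ : Fin N → Fin F → ℝ) (μfac : ℕ → Fin F → ℝ)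
    (Yobs Yinf ε : Fin N → ℕ → ℝ)
    (hmodel : ∀ i t, Yinf i t = (∑ f, φ i f * μfac t f) + ε i t)
    (Ωmat : Fin J → Matrix (Fin L) (Fin F) ℝ)
    (hΩ : ∀ j, Ωmat j = Matrix.of fun (ℓ : Fin L) (f : Fin F) => μfac (T j - (ℓ.1 + 1)) f)
    (hGram : ∀ j, IsUnit ((Ωmat j).transpose * Ωmat j).det)
    (P : Fin J → Matrix (Fin F) (Fin L) ℝ)
    (hP : ∀ j, P j = Real.sqrt L • (((Ωmat j).transpose * Ωmat j)⁻¹ * (Ωmat j).transpose))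
    (γ : Fin N → Fin J → ℝ)
    (htreated : ∀ j, ∀ t < T j, Yobs (tr j) t = Yinf (tr j) t)
    (hdonor : ∀ i j, γ i j ≠ 0 → ∀ t ≤ T j + k, Yobs i t = Yinf i t) :
    ((J : ℝ)⁻¹ * ∑ j, (Yobs (tr j) (T j + k) - ∑ i, γ i j * Yobs i (T j + k))) -
      ((J : ℝ)⁻¹ * ∑ j, (Yobs (tr j) (T j + k) - Yinf (tr j) (T j + k))) =
      ((J : ℝ)⁻¹ * (Real.sqrt L)⁻¹ * ∑ j, ∑ ℓ : Fin L,
          (∑ f, μfac (T j + k) f * P j f ℓ) *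
            (Yobs (tr j) (T j - (ℓ.1 + 1)) - ∑ i, γ i j * Yobs i (T j - (ℓ.1 + 1)))) -
      ((J : ℝ)⁻¹ * (Real.sqrt L)⁻¹ * ∑ j, ∑ ℓ : Fin L,
          (∑ f, μfac (T j + k) f * P j f ℓ) *
            (ε (tr j) (T j - (ℓ.1 + 1)) - ∑ i, γ i j * ε i (T j - (ℓ.1 + 1)))) +
      ((J : ℝ)⁻¹ * ∑ j, (ε (tr j) (T j + k) - ∑ i, γ i j * ε i (T j + k))) := by
  set s : ℝ := (Real.sqrt L)⁻¹ with hs_def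
  have hLpos : (0:ℝ) < L := by exact_mod_cast hL
  have hsL : Real.sqrt L ≠ 0 := ne_of_gt (Real.sqrt_pos.mpr hLpos)
  have hsmul : s * Real.sqrt L = 1 := inv_mul_cancel₀ hsL
  -- entrywise identity: ∑ ℓ, P j f ℓ * μfac (lag ℓ) f' = √L * δ_{ff'}
  have hPΩ : ∀ (j : Fin J) (f f' : Fin F),
      ∑ ℓ : Fin L, P j f ℓ * μfac (T j - (ℓ.1 + 1)) f'
        = Real.sqrt L * (if f = f' then (1:ℝ) else 0) := by
    intro j f f'
    have h1 : P j * Ωmat j = Real.sqrt L • (1 : Matrix (Fin F) (Fin F) ℝ) := by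
      rw [hP j, Matrix.smul_mul, Matrix.mul_assoc,
        Matrix.nonsing_inv_mul _ (hGram j)]
    have h2 := congrFun (congrFun h1 f) f'
    simpa [Matrix.mul_apply, Matrix.smul_apply, Matrix.one_apply, hΩ j, smul_eq_mul]
      using h2
  -- key projection identity
  have key : ∀ (j : Fin J) (c : Fin F → ℝ),
      s * ∑ ℓ : Fin L, (∑ f, μfac (T j + k) f * P j f ℓ) *
          (∑ f', c f' * μfac (T j - (ℓ.1 + 1)) f')
        = ∑ f, c f * μfac (T j + k) f := by
    intro j c
    have expand : ∑ ℓ : Fin L, (∑ f, μfac (T j + k) f * P j f ℓ) *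
          (∑ f', c f' * μfac (T j - (ℓ.1 + 1)) f')
        = ∑ f, ∑ f', (μfac (T j + k) f * c f') *
            (∑ ℓ : Fin L, P j f ℓ * μfac (T j - (ℓ.1 + 1)) f') := by
      calc ∑ ℓ : Fin L, (∑ f, μfac (T j + k) f * P j f ℓ) *
              (∑ f', c f' * μfac (T j - (ℓ.1 + 1)) f')
          = ∑ ℓ : Fin L, ∑ f, ∑ f',
              (μfac (T j + k) f * P j f ℓ) * (c f' * μfac (T j - (ℓ.1 + 1)) f') := by
            exact Finset.sum_congr rfl fun ℓ _ => by
              rw [Finset.sum_mul]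
              exact Finset.sum_congr rfl fun f _ => by rw [Finset.mul_sum]
        _ = ∑ f, ∑ ℓ : Fin L, ∑ f',
              (μfac (T j + k) f * P j f ℓ) * (c f' * μfac (T j - (ℓ.1 + 1)) f') :=
            Finset.sum_comm
        _ = ∑ f, ∑ f', ∑ ℓ : Fin L,
              (μfac (T j + k) f * P j f ℓ) * (c f' * μfac (T j - (ℓ.1 + 1)) f') :=
            Finset.sum_congr rfl fun f _ => Finset.sum_comm
        _ = ∑ f, ∑ f', (μfac (T j + k) f * c f') *
              (∑ ℓ : Fin L, P j f ℓ * μfac (T j - (ℓ.1 + 1)) f') :=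
            Finset.sum_congr rfl fun f _ => Finset.sum_congr rfl fun f' _ => by
              rw [Finset.mul_sum]
              exact Finset.sum_congr rfl fun ℓ _ => by ring
    rw [expand, Finset.mul_sum]
    refine Finset.sum_congr rfl fun f _ => ?_
    rw [Finset.mul_sum]
    have hterm : ∀ f' : Fin F,
        s * ((μfac (T j + k) f * c f') *
          (∑ ℓ : Fin L, P j f ℓ * μfac (T j - (ℓ.1 + 1)) f'))
        = (if f = f' then (1:ℝ) else 0) * (c f' * μfac (T j + k) f) := by
      intro f'
      rw [hPΩ j f f']
      have : s * ((μfac (T j + k) f * c f') * (Real.sqrt L * (if f = f' then (1:ℝ) else 0)))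
          = (s * Real.sqrt L) * ((if f = f' then (1:ℝ) else 0) * (c f' * μfac (T j + k) f)) := by
        ring
      rw [this, hsmul, one_mul]
    rw [Finset.sum_congr rfl fun f' _ => hterm f']
    simp
  -- Yinf difference decomposition
  have hdiff : ∀ (j : Fin J) (t : ℕ),
      Yinf (tr j) t - ∑ i, γ i j * Yinf i t
        = (∑ f, (φ (tr j) f - ∑ i, γ i j * φ i f) * μfac t f)
          + (ε (tr j) t - ∑ i, γ i j * ε i t) := by
    intro j t
    have h1 : ∑ i, γ i j * Yinf i t
        = (∑ f, (∑ i, γ i j * φ i f) * μfac t f) + ∑ i, γ i j * ε i t := by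
      simp only [hmodel, mul_add, Finset.sum_add_distrib, Finset.mul_sum]
      congr 1
      rw [Finset.sum_comm]
      refine Finset.sum_congr rfl fun f _ => ?_
      rw [Finset.sum_mul]
      exact Finset.sum_congr rfl fun i _ => by ring
    rw [hmodel, h1]
    simp only [sub_mul, Finset.sum_sub_distrib]
    ring
  -- donor sums agree with untreated potential outcomes
  have hγsum : ∀ (j : Fin J) (t : ℕ), t ≤ T j + k →
      ∑ i, γ i j * Yobs i t = ∑ i, γ i j * Yinf i t := by
    intro j t ht
    refine Finset.sum_congr rfl fun i _ => ?_
    by_cases hγ : γ i j = 0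
    · simp [hγ]
    · rw [hdonor i j hγ t ht]
  have hlaglt : ∀ (j : Fin J) (ℓ : Fin L), T j - (ℓ.1 + 1) < T j :=
    fun j ℓ => Nat.sub_lt (lt_of_le_of_lt (Nat.zero_le _) (hLT j)) (Nat.succ_pos _)
  have hlagle : ∀ (j : Fin J) (ℓ : Fin L), T j - (ℓ.1 + 1) ≤ T j + k :=
    fun j ℓ => le_trans (Nat.sub_le _ _) (Nat.le_add_right _ _)
  -- per-j identity
  have perj : ∀ j : Fin J,
      Yinf (tr j) (T j + k) - ∑ i, γ i j * Yinf i (T j + k)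
        = s * (∑ ℓ : Fin L, (∑ f, μfac (T j + k) f * P j f ℓ) *
              (Yobs (tr j) (T j - (ℓ.1 + 1)) - ∑ i, γ i j * Yobs i (T j - (ℓ.1 + 1))))
          - s * (∑ ℓ : Fin L, (∑ f, μfac (T j + k) f * P j f ℓ) *
              (ε (tr j) (T j - (ℓ.1 + 1)) - ∑ i, γ i j * ε i (T j - (ℓ.1 + 1))))
          + (ε (tr j) (T j + k) - ∑ i, γ i j * ε i (T j + k)) := by
    intro j
    have hlageq : ∀ ℓ : Fin L,
        Yobs (tr j) (T j - (ℓ.1 + 1)) - ∑ i, γ i j * Yobs i (T j - (ℓ.1 + 1))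
          = (∑ f, (φ (tr j) f - ∑ i, γ i j * φ i f) * μfac (T j - (ℓ.1 + 1)) f)
            + (ε (tr j) (T j - (ℓ.1 + 1)) - ∑ i, γ i j * ε i (T j - (ℓ.1 + 1))) := by
      intro ℓ
      rw [htreated j _ (hlaglt j ℓ), hγsum j _ (hlagle j ℓ), hdiff]
    rw [hdiff j (T j + k)]
    have hS1 : ∑ ℓ : Fin L, (∑ f, μfac (T j + k) f * P j f ℓ) *
          (Yobs (tr j) (T j - (ℓ.1 + 1)) - ∑ i, γ i j * Yobs i (T j - (ℓ.1 + 1)))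
        = (∑ ℓ : Fin L, (∑ f, μfac (T j + k) f * P j f ℓ) *
            (∑ f, (φ (tr j) f - ∑ i, γ i j * φ i f) * μfac (T j - (ℓ.1 + 1)) f))
          + ∑ ℓ : Fin L, (∑ f, μfac (T j + k) f * P j f ℓ) *
              (ε (tr j) (T j - (ℓ.1 + 1)) - ∑ i, γ i j * ε i (T j - (ℓ.1 + 1))) := by
      rw [← Finset.sum_add_distrib]
      exact Finset.sum_congr rfl fun ℓ _ => by rw [hlageq ℓ]; ring
    rw [hS1, mul_add, key j (fun f => φ (tr j) f - ∑ i, γ i j * φ i f)]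
    ring
  -- per-j form of the left-hand side
  have hL1 : ∀ j : Fin J,
      (Yobs (tr j) (T j + k) - ∑ i, γ i j * Yobs i (T j + k))
        - (Yobs (tr j) (T j + k) - Yinf (tr j) (T j + k))
      = Yinf (tr j) (T j + k) - ∑ i, γ i j * Yinf i (T j + k) := by
    intro j
    rw [hγsum j (T j + k) le_rfl]
    ring
  -- assemble
  have hregroup : ∀ X Y Z : Fin J → ℝ,
      (J:ℝ)⁻¹ * s * ∑ j, X j - (J:ℝ)⁻¹ * s * ∑ j, Y j + (J:ℝ)⁻¹ * ∑ j, Z j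
        = (J:ℝ)⁻¹ * ∑ j, (s * X j - s * Y j + Z j) := by
    intro X Y Z
    simp only [mul_assoc, Finset.mul_sum]
    rw [← Finset.sum_sub_distrib, ← Finset.sum_add_distrib]
    exact Finset.sum_congr rfl fun j _ => by ring
  rw [← mul_sub, ← Finset.sum_sub_distrib, hregroup]
  refine congrArg _ (Finset.sum_congr rfl fun j _ => ?_)
  rw [hL1 j]
  exact perj j
end

section
/- Exact-balance identity for the intercept-shifted estimator: suppose for each treatment time g, event time k, and lag ℓ the outcome differences satisfy the linear model Y_{i,g+k}(∞) − (1/L)Σ_{ℓ=1}^L Y_{i,g−ℓ}(∞) = β̄^Y_{gk}·Ẏ_i^g + β̄^X_{gk}·X_i + ε_{igk} for coefficient vectors β̄^Y_{gk} ∈ ℝ^L, β̄^X_{gk} ∈ ℝ^d; suppose the weights γ̂_{ij} satisfy Σ_i γ̂_{ij} = 1 and achieve exact balance within every treatment-time cohort g: (1/n_g)Σ_{T_i=g} Ẏ_i^g = (1/n_g)Σ_i Σ_{T_j=g} γ̂_{ij} Ẏ_i^g and (1/n_g)Σ_{T_i=g} X_i = (1/n_g)Σ_i Σ_{T_j=g}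 γ̂_{ij} X_i. Then the intercept-shifted ATT estimator satisfies exactly: ATT̂_k − ATT_k = (1/J)Σ_{j=1}^J (ε_{j,T_j,k} − Σ_i γ̂_{ij} ε_{i,T_j,k}). -/
noncomputable def Yd {N : ℕ} (Yinf : Fin N → ℕ → ℝ) (L : ℕ) (i : Fin N) (g : ℕ)
    (m : Fin L) : ℝ :=
  Yinf i (g - (m.1 + 1)) - (L : ℝ)⁻¹ * ∑ ℓ ∈ Finset.Icc 1 L, Yinf i (g - ℓ)

noncomputable def Sf {N d L : ℕ} (Yinf : Fin N → ℕ → ℝ) (X : Fin N → Fin d → ℝ)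
    (βY : ℕ → Fin L → ℝ) (βX : ℕ → Fin d → ℝ) (i : Fin N) (g : ℕ) : ℝ :=
  (∑ m : Fin L, βY g m * Yd Yinf L i g m) + ∑ m, βX g m * X i m

lemma swap_lin1 {α β : Type*} (F : Finset α) (s : Finset β) (a : β → ℝ) (f : β → α → ℝ) :
    ∑ j ∈ F, ∑ m ∈ s, a m * f m j = ∑ m ∈ s, a m * ∑ j ∈ F, f m j := by
  rw [Finset.sum_comm]; simp [Finset.mul_sum]

lemma swap_lin2 {ι β : Type*} (s : Finset ι) (t : Finset β) (w : ι → ℝ) (a : β → ℝ)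
    (f : β → ι → ℝ) :
    ∑ i ∈ s, w i * ∑ m ∈ t, a m * f m i = ∑ m ∈ t, a m * ∑ i ∈ s, w i * f m i := by
  simp only [Finset.mul_sum]
  rw [Finset.sum_comm]
  exact Finset.sum_congr rfl fun m _ => Finset.sum_congr rfl fun i _ => by ring


open Finset

/-- **Exact-balance identity for the intercept-shifted estimator.** Suppose the outcome
differences follow the linear model with (averaged) coefficients `β̄^Y_{gk}`, `β̄^X_{gk}`
and residuals `ε`, the weights sum to one and achieve exact balance of both the
residualized lagged outcomes `Ẏ_i^g` and the covariates `X_i` within every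
treatment-time cohort `g` (scaled by the cohort size `n_g`).  Then the intercept-shifted
ATT estimator satisfies exactly
`ATT̂_k − ATT_k = (1/J)∑_j (ε_{j,T_j,k} − ∑_i γ̂_{ij} ε_{i,T_j,k})`. -/
theorem exact_balance_identity
    (N J d L k : ℕ) (hL : 0 < L)
    (tr : Fin J → Fin N) (htr : Function.Injective tr)
    (T : Fin J → ℕ) (hLT : ∀ j, L < T j)
    (Yobs Yinf : Fin N → ℕ → ℝ)
    (ε : Fin N → ℕ → ℝ)  -- `ε i g` is the residual `ε_{i,g,k}` at the fixed event time `k`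
    (X : Fin N → Fin d → ℝ)
    (βY : ℕ → Fin L → ℝ) (βX : ℕ → Fin d → ℝ)
    (γ : Fin N → Fin J → ℝ) (hγsum : ∀ j, ∑ i, γ i j = 1)
    -- linear model for the post-/pre-treatment outcome differences
    (hmodel : ∀ (i : Fin N) (g : ℕ),
      Yinf i (g + k) - (L : ℝ)⁻¹ * ∑ ℓ ∈ Icc 1 L, Yinf i (g - ℓ) =
        (∑ m : Fin L, βY g m *
          (Yinf i (g - (m.1 + 1)) - (L : ℝ)⁻¹ * ∑ ℓ ∈ Icc 1 L, Yinf i (g - ℓ))) +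
        (∑ m, βX g m * X i m) + ε i g)
    -- exact balance of the residualized lagged outcomes within each treatment cohort
    (hbalY : ∀ g : ℕ, (∃ j, T j = g) → ∀ m : Fin L,
      ((univ.filter fun j => T j = g).card : ℝ)⁻¹ *
          ∑ j ∈ univ.filter (fun j => T j = g),
            (Yinf (tr j) (g - (m.1 + 1)) -
              (L : ℝ)⁻¹ * ∑ ℓ ∈ Icc 1 L, Yinf (tr j) (g - ℓ)) =
        ((univ.filter fun j => T j = g).card : ℝ)⁻¹ *
          ∑ i, ∑ j ∈ univ.filter (fun j => T j = g),
            γ i j * (Yinf i (g - (m.1 + 1)) -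
              (L : ℝ)⁻¹ * ∑ ℓ ∈ Icc 1 L, Yinf i (g - ℓ)))
    -- exact balance of the covariates within each treatment cohort
    (hbalX : ∀ g : ℕ, (∃ j, T j = g) → ∀ m : Fin d,
      ((univ.filter fun j => T j = g).card : ℝ)⁻¹ *
          ∑ j ∈ univ.filter (fun j => T j = g), X (tr j) m =
        ((univ.filter fun j => T j = g).card : ℝ)⁻¹ *
          ∑ i, ∑ j ∈ univ.filter (fun j => T j = g), γ i j * X i m)
    -- observed outcomes equal untreated potential outcomes pre-treatment / for donors
    (htreated : ∀ (j : Fin J), ∀ t < T j, Yobs (tr j) t = Yinf (tr j) t)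
    (hdonor : ∀ (i : Fin N) (j : Fin J), γ i j ≠ 0 →
      ∀ t ≤ T j + k, Yobs i t = Yinf i t) :
    ((J : ℝ)⁻¹ * ∑ j,
        (Yobs (tr j) (T j + k) - (L : ℝ)⁻¹ * ∑ ℓ ∈ Icc 1 L, Yobs (tr j) (T j - ℓ) -
          ∑ i, γ i j *
            (Yobs i (T j + k) - (L : ℝ)⁻¹ * ∑ ℓ ∈ Icc 1 L, Yobs i (T j - ℓ)))) -
      ((J : ℝ)⁻¹ * ∑ j, (Yobs (tr j) (T j + k) - Yinf (tr j) (T j + k))) =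
      (J : ℝ)⁻¹ * ∑ j, (ε (tr j) (T j) - ∑ i, γ i j * ε i (T j)) := by
  classical
  have hterm : ∀ j : Fin J,
      (Yobs (tr j) (T j + k) - (L : ℝ)⁻¹ * ∑ ℓ ∈ Icc 1 L, Yobs (tr j) (T j - ℓ) -
          ∑ i, γ i j * (Yobs i (T j + k) - (L : ℝ)⁻¹ * ∑ ℓ ∈ Icc 1 L, Yobs i (T j - ℓ))) -
        (Yobs (tr j) (T j + k) - Yinf (tr j) (T j + k)) =
      (Sf Yinf X βY βX (tr j) (T j) + ε (tr j) (T j)) -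
        ∑ i, γ i j * (Sf Yinf X βY βX i (T j) + ε i (T j)) := by
    intro j
    have hm : ∀ i : Fin N,
        Yinf i (T j + k) - (L : ℝ)⁻¹ * ∑ ℓ ∈ Icc 1 L, Yinf i (T j - ℓ) =
          Sf Yinf X βY βX i (T j) + ε i (T j) := by
      intro i
      rw [hmodel i (T j)]
      simp [Sf, Yd, add_assoc]
    have hpre : ∑ ℓ ∈ Icc 1 L, Yobs (tr j) (T j - ℓ) =
        ∑ ℓ ∈ Icc 1 L, Yinf (tr j) (T j - ℓ) := by
      refine Finset.sum_congr rfl fun ℓ hℓ => htreated j _ ?_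
      have h1 : 1 ≤ ℓ := (mem_Icc.mp hℓ).1
      have := hLT j
      omega
    have hdon : ∀ i : Fin N,
        γ i j * (Yobs i (T j + k) - (L : ℝ)⁻¹ * ∑ ℓ ∈ Icc 1 L, Yobs i (T j - ℓ)) =
        γ i j * (Sf Yinf X βY βX i (T j) + ε i (T j)) := by
      intro i
      by_cases hγ : γ i j = 0
      · simp [hγ]
      · rw [← hm i]
        rw [hdonor i j hγ _ le_rfl,
          Finset.sum_congr rfl fun ℓ _ => hdonor i j hγ (T j - ℓ) (by omega)]
    rw [hpre, Finset.sum_congr rfl fun i _ => hdon i]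
    have h0 := hm (tr j)
    linarith [h0]
  have key : ∑ j, (Sf Yinf X βY βX (tr j) (T j) - ∑ i, γ i j * Sf Yinf X βY βX i (T j)) = 0 := by
    rw [← Finset.sum_fiberwise_of_maps_to (g := T) (t := univ.image T)
        (fun j _ => mem_image_of_mem T (mem_univ j))]
    refine Finset.sum_eq_zero fun g hg => ?_
    obtain ⟨j₀, -, hj₀⟩ := mem_image.mp hg
    set F := univ.filter fun j => T j = g with hF
    have hj₀F : j₀ ∈ F := mem_filter.mpr ⟨mem_univ _, hj₀⟩
    have hne : (F.card : ℝ) ≠ 0 := by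
      have := Finset.card_pos.mpr ⟨j₀, hj₀F⟩
      exact_mod_cast this.ne'
    have hEY : ∀ m : Fin L, ∑ j ∈ F, Yd Yinf L (tr j) g m =
        ∑ i, ∑ j ∈ F, γ i j * Yd Yinf L i g m :=
      fun m => mul_left_cancel₀ (inv_ne_zero hne) (hbalY g ⟨j₀, hj₀⟩ m)
    have hEX : ∀ m : Fin d, ∑ j ∈ F, X (tr j) m = ∑ i, ∑ j ∈ F, γ i j * X i m :=
      fun m => mul_left_cancel₀ (inv_ne_zero hne) (hbalX g ⟨j₀, hj₀⟩ m)
    have hTg : ∀ j ∈ F, T j = g := fun j hj => (mem_filter.mp hj).2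
    rw [Finset.sum_congr rfl fun j hj => by rw [hTg j hj]]
    rw [Finset.sum_sub_distrib, sub_eq_zero]
    calc ∑ j ∈ F, Sf Yinf X βY βX (tr j) g
        = (∑ m : Fin L, βY g m * ∑ j ∈ F, Yd Yinf L (tr j) g m) +
            ∑ m : Fin d, βX g m * ∑ j ∈ F, X (tr j) m := by
          simp only [Sf]
          rw [Finset.sum_add_distrib, swap_lin1, swap_lin1]
      _ = (∑ m : Fin L, βY g m * ∑ i, (∑ j ∈ F, γ i j) * Yd Yinf L i g m) +
            ∑ m : Fin d, βX g m * ∑ i, (∑ j ∈ F, γ i j) * X i m := by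
          simp only [hEY, hEX, Finset.sum_mul]
      _ = ∑ i, (∑ j ∈ F, γ i j) * Sf Yinf X βY βX i g := by
          symm
          simp only [Sf, mul_add, Finset.sum_add_distrib]
          congr 1
          · exact swap_lin2 univ univ _ (βY g) fun m i => Yd Yinf L i g m
          · exact swap_lin2 univ univ _ (βX g) fun m i => X i m
      _ = ∑ j ∈ F, ∑ i, γ i j * Sf Yinf X βY βX i g := by
          rw [Finset.sum_comm]
          exact Finset.sum_congr rfl fun i _ => Finset.sum_mul ..
  rw [← mul_sub, ← Finset.sum_sub_distrib, Finset.sum_congr rfl fun j _ => hterm j]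
  congr 1
  have expand : ∑ j, ((Sf Yinf X βY βX (tr j) (T j) + ε (tr j) (T j)) -
      ∑ i, γ i j * (Sf Yinf X βY βX i (T j) + ε i (T j))) =
      (∑ j, (Sf Yinf X βY βX (tr j) (T j) - ∑ i, γ i j * Sf Yinf X βY βX i (T j))) +
      ∑ j, (ε (tr j) (T j) - ∑ i, γ i j * ε i (T j)) := by
    rw [← Finset.sum_add_distrib]
    refine Finset.sum_congr rfl fun j _ => ?_
    have h1 : ∑ i, γ i j * (Sf Yinf X βY βX i (T j) + ε i (T j)) =
        (∑ i, γ i j * Sf Yinf X βY βX i (T j)) + ∑ i, γ i j * ε i (T j) := by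
      rw [← Finset.sum_add_distrib]
      exact Finset.sum_congr rfl fun i _ => mul_add ..
    rw [h1]
    ring
  rw [expand, key, zero_add]
end
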